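/- Fix reals μ > 0, k > 0, η > 0, d and Δd, set g(d) := (1−d)² + η, and let ε, Δε be symmetric real 3×3 matrices with tr ε > 0. Define Δσ := g(d)[2μ Δε^dev + k (tr Δε) I] − 2(1−d)[2μ ε^dev + k (tr ε) I] Δd. If tr Δσ = 0, Δσ · ε^dev = 0 and Δσ · Δε = 0, then Δε^dev · Δε^dev = 4 ((1−d)²/g(d)²) (ε^dev · ε^dev) (Δd)². -/

import Mathlib

open Matrix

/-- Deviatoric part of a 3×3 real matrix. -/
noncomputable def dev (A : Matrix (Fin 3) (Fin 3) ℝ) : Matrix (Fin 3) (Fin 3) ℝ :=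
  A - (A.trace / 3) • (1 : Matrix (Fin 3) (Fin 3) ℝ)

/-- Frobenius inner product of 3×3 real matrices. -/
noncomputable def frob (A B : Matrix (Fin 3) (Fin 3) ℝ) : ℝ := (Aᵀ * B).trace

/-!
With `g = (1 - d)² + η` and `c = 2 (1 - d) Δd`, the increment splits as
`Δσ = 2μ D + k (g tr Δε - c tr ε) I` with `D = g Δε^dev - c ε^dev` traceless, so `tr Δσ = 0`
kills the volumetric part and `Δσ = 2μ D`. The two orthogonality conditions then say
`D · ε^dev = 0` and `D · Δε^dev = 0` (the latter because `Δσ` is traceless, so pairing it with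
`Δε` or with `Δε^dev` gives the same). Hence
`g² Δε^dev · Δε^dev - c² ε^dev · ε^dev = g (D · Δε^dev) + c (D · ε^dev) = 0`.
-/

section Frobenius

variable (A B C : Matrix (Fin 3) (Fin 3) ℝ) (a : ℝ)

lemma trace_dev : (dev A).trace = 0 := by
  simp [dev, trace_sub, trace_smul, trace_one]

lemma frob_comm : frob A B = frob B A := by
  rw [frob, ← trace_transpose, transpose_mul, transpose_transpose, frob]

lemma frob_sub_left : frob (A - B) C = frob A C - frob B C := by
  simp [frob, transpose_sub, sub_mul, trace_sub]

lemma frob_smul_left : frob (a • A) B = a * frob A B := by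
  simp [frob, transpose_smul, trace_smul]

lemma frob_dev_right : frob A (dev B) = frob A B - B.trace / 3 * A.trace := by
  simp [frob, dev, mul_sub, trace_sub, trace_smul, trace_transpose]

variable {A}

lemma frob_dev_right_of_trace_eq_zero (hA : A.trace = 0) : frob A (dev B) = frob A B := by
  rw [frob_dev_right, hA, mul_zero, sub_zero]

end Frobenius

lemma sq_mul_frob_self_eq_of_frob_eq_zero {A B : Matrix (Fin 3) (Fin 3) ℝ} {a b : ℝ}
    (hA : frob (a • A - b • B) A = 0) (hB : frob (a • A - b • B) B = 0) :
    a ^ 2 * frob A A = b ^ 2 * frob B B := by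
  simp only [frob_sub_left, frob_smul_left] at hA hB
  linear_combination a * hA + b * hB - a * b * frob_comm A B

theorem fixed_stress_deviatoric_increment_norm_general
    (μ k η d Δd : ℝ) (hμ : 0 < μ) (hη : 0 < η)
    (ε Δε : Matrix (Fin 3) (Fin 3) ℝ)
    (Δσ : Matrix (Fin 3) (Fin 3) ℝ)
    (hΔσ : Δσ = ((1 - d) ^ 2 + η) •
        ((2 * μ) • dev Δε + (k * Δε.trace) • (1 : Matrix (Fin 3) (Fin 3) ℝ))
      - (2 * (1 - d) * Δd) •
        ((2 * μ) • dev ε + (k * ε.trace) • (1 : Matrix (Fin 3) (Fin 3) ℝ)))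
    (h0 : Δσ.trace = 0) (h1 : frob Δσ (dev ε) = 0) (h2 : frob Δσ Δε = 0) :
    frob (dev Δε) (dev Δε)
      = 4 * ((1 - d) ^ 2 / ((1 - d) ^ 2 + η) ^ 2) * frob (dev ε) (dev ε) * Δd ^ 2 := by
  set g := (1 - d) ^ 2 + η
  set c := 2 * (1 - d) * Δd
  set D := g • dev Δε - c • dev ε
  have hsplit : Δσ = (2 * μ) • D + (k * (g * Δε.trace - c * ε.trace)) • 1 := by
    rw [hΔσ]; module
  have hvol : k * (g * Δε.trace - c * ε.trace) = 0 := by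
    have h := congrArg trace hsplit
    simp only [D, h0, trace_add, trace_sub, trace_smul, trace_dev, trace_one, Fintype.card_fin,
      Nat.cast_ofNat, smul_eq_mul] at h
    linarith
  have hΔσD : Δσ = (2 * μ) • D := by rw [hsplit, hvol, zero_smul, add_zero]
  have hμ2 : 2 * μ ≠ 0 := by positivity
  have hDε : frob D (dev ε) = 0 := by
    rw [hΔσD, frob_smul_left] at h1
    exact (mul_eq_zero.1 h1).resolve_left hμ2
  have hDΔε : frob D (dev Δε) = 0 := by
    rw [← frob_dev_right_of_trace_eq_zero _ h0, hΔσD, frob_smul_left] at h2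
    exact (mul_eq_zero.1 h2).resolve_left hμ2
  have key := sq_mul_frob_self_eq_of_frob_eq_zero hDΔε hDε
  have hg : g ≠ 0 := by positivity
  field_simp
  linear_combination key

theorem fixed_stress_deviatoric_increment_norm
    (μ k η d Δd : ℝ) (hμ : 0 < μ) (hk : 0 < k) (hη : 0 < η)
    (ε Δε : Matrix (Fin 3) (Fin 3) ℝ) (hε : ε.IsSymm) (hΔε : Δε.IsSymm)
    (htr : 0 < ε.trace)
    (Δσ : Matrix (Fin 3) (Fin 3) ℝ)
    (hΔσ : Δσ = ((1 - d) ^ 2 + η) •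
        ((2 * μ) • dev Δε + (k * Δε.trace) • (1 : Matrix (Fin 3) (Fin 3) ℝ))
      - (2 * (1 - d) * Δd) •
        ((2 * μ) • dev ε + (k * ε.trace) • (1 : Matrix (Fin 3) (Fin 3) ℝ)))
    (h0 : Δσ.trace = 0) (h1 : frob Δσ (dev ε) = 0) (h2 : frob Δσ Δε = 0) :
    frob (dev Δε) (dev Δε)
      = 4 * ((1 - d) ^ 2 / ((1 - d) ^ 2 + η) ^ 2) * frob (dev ε) (dev ε) * Δd ^ 2 :=
  fixed_stress_deviatoric_increment_norm_general μ k η d Δd hμ hη ε Δε Δσ hΔσ h0 h1 h2
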